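/- arXiv:1411.3206 — 3 statements merged into one kernel-verified Lean document; each statement's English description precedes it below -/
import Mathlib

section
/- Bernstein's multiplier estimate: let s > n/2 and 1 ≤ r ≤ ∞. Then there exists a constant C > 0 (depending only on n, s, r) such that for every Schwartz function φ on ℝⁿ and every f ∈ L^r(ℝⁿ), ‖(2π)^{−n/2} (𝓕^{−1}φ) ∗ f‖_{L^r} ≤ C ‖⟨·⟩^s φ̂‖_{L²} ‖f‖_{L^r}, where ⟨ξ⟩ = (1+|ξ|²)^{1/2} and (2π)^{−n/2}(𝓕^{−1}φ) ∗ f = 𝓕^{−1}(φ · 𝓕f); i.e. ‖𝓕^{−1}(φ 𝓕f)‖_{L^r} ≤ C ‖φ‖_{H^s} ‖f‖_{L^r}. -/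
open MeasureTheory Complex Filter
open scoped Real ENNReal NNReal BigOperators

noncomputable section

abbrev E (n : ℕ) := EuclideanSpace ℝ (Fin n)

/-- The Fourier transform `f̂(ξ) = (2π)^{-n/2} ∫ f(x) e^{-i x·ξ} dx`. -/
def FT (n : ℕ) (f : E n → ℂ) (ξ : E n) : ℂ :=
  (((2 * Real.pi) ^ (-(n : ℝ) / 2) : ℝ) : ℂ) *
    ∫ x : E n, f x * Complex.exp (-(Complex.I * ((inner ℝ x ξ : ℝ) : ℂ)))

/-- The inverse Fourier transform. -/
def invFT (n : ℕ) (g : E n → ℂ) (x : E n) : ℂ :=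
  (((2 * Real.pi) ^ (-(n : ℝ) / 2) : ℝ) : ℂ) *
    ∫ ξ : E n, g ξ * Complex.exp (Complex.I * ((inner ℝ x ξ : ℝ) : ℂ))

/-- The Sobolev `H^s` norm `‖⟨·⟩^s φ̂‖_{L²}` of a function. -/
def HsNorm (n : ℕ) (s : ℝ) (φ : E n → ℂ) : ℝ :=
  Real.sqrt (∫ ξ : E n, (1 + ‖ξ‖ ^ 2) ^ s * ‖FT n φ ξ‖ ^ 2)

/-!
The operator is convolution with the kernel `(2π)^{-n/2} 𝓕⁻¹φ`, and `𝓕⁻¹φ(x) = φ̂(-x)`.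
By Young's inequality it is therefore bounded on every `L^r` by `(2π)^{-n/2} ‖φ̂‖_{L¹}`, and by
Cauchy–Schwarz `‖φ̂‖_{L¹} ≤ ‖⟨·⟩^{-s}‖_{L²} ‖⟨·⟩^s φ̂‖_{L²}`, where `⟨·⟩^{-s}` is square
integrable precisely because `2s > n`.
-/

open scoped SchwartzMap FourierTransform

/-- Jensen's inequality for `t ↦ t ^ p` and the measure `K ∂ν`. -/
theorem rpow_lintegral_mul_le {α : Type*} [MeasurableSpace α] {ν : Measure α} {K g : α → ℝ≥0∞}
    (hK : AEMeasurable K ν) (hg : AEMeasurable g ν) {p : ℝ} (hp : 1 ≤ p) :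
    (∫⁻ y, K y * g y ∂ν) ^ p ≤ (∫⁻ y, K y ∂ν) ^ (p - 1) * ∫⁻ y, K y * g y ^ p ∂ν := by
  have hp0 : 0 < p := by linarith
  have hsplit : ∀ y, K y * g y = (K y * g y ^ p) ^ p⁻¹ * K y ^ (1 - p⁻¹) := fun y => by
    rw [ENNReal.mul_rpow_of_nonneg _ _ (inv_nonneg.2 hp0.le), ← ENNReal.rpow_mul,
      mul_inv_cancel₀ hp0.ne', ENNReal.rpow_one, mul_right_comm, ← ENNReal.rpow_add_of_nonneg _ _
      (inv_nonneg.2 hp0.le) (sub_nonneg.2 (inv_le_one_of_one_le₀ hp)), add_sub_cancel,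
      ENNReal.rpow_one]
  have holder : ∫⁻ y, K y * g y ∂ν ≤
      (∫⁻ y, K y * g y ^ p ∂ν) ^ p⁻¹ * (∫⁻ y, K y ∂ν) ^ (1 - p⁻¹) := by
    simp_rw [hsplit]
    exact ENNReal.lintegral_mul_norm_pow_le (hK.mul (hg.pow_const p)) hK
      (inv_nonneg.2 hp0.le) (sub_nonneg.2 (inv_le_one_of_one_le₀ hp)) (add_sub_cancel _ _)
  calc (∫⁻ y, K y * g y ∂ν) ^ p
      ≤ ((∫⁻ y, K y * g y ^ p ∂ν) ^ p⁻¹ * (∫⁻ y, K y ∂ν) ^ (1 - p⁻¹)) ^ p :=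
        ENNReal.rpow_le_rpow holder hp0.le
    _ = (∫⁻ y, K y ∂ν) ^ (p - 1) * ∫⁻ y, K y * g y ^ p ∂ν := by
        rw [ENNReal.mul_rpow_of_nonneg _ _ hp0.le, ← ENNReal.rpow_mul, ← ENNReal.rpow_mul,
          inv_mul_cancel₀ hp0.ne', ENNReal.rpow_one, sub_mul, one_mul, inv_mul_cancel₀ hp0.ne',
          mul_comm]

section Convolution

variable {G : Type*} [MeasurableSpace G] [AddCommGroup G] [MeasurableAdd₂ G] [MeasurableNeg G]
  {μ : Measure G} [SFinite μ] [μ.IsAddLeftInvariant]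

theorem lintegral_lintegral_mul_comp_sub {K F : G → ℝ≥0∞} (hK : Measurable K)
    (hF : Measurable F) :
    ∫⁻ x, ∫⁻ y, K y * F (x - y) ∂μ ∂μ = (∫⁻ y, K y ∂μ) * ∫⁻ z, F z ∂μ := by
  rw [lintegral_lintegral_swap ((hK.comp measurable_snd).mul
    (hF.comp (measurable_fst.sub measurable_snd))).aemeasurable, ← lintegral_mul_const _ hK]
  refine lintegral_congr fun y => ?_
  rw [lintegral_const_mul _ (by fun_prop : Measurable fun x => F (x - y)),
    (measurePreserving_sub_right μ y).lintegral_comp hF]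

theorem lintegral_rpow_lintegral_mul_comp_sub_le {K F : G → ℝ≥0∞} (hK : Measurable K)
    (hF : Measurable F) {p : ℝ} (hp : 1 ≤ p) :
    ∫⁻ x, (∫⁻ y, K y * F (x - y) ∂μ) ^ p ∂μ ≤ (∫⁻ y, K y ∂μ) ^ p * ∫⁻ z, F z ^ p ∂μ := by
  have hFp : Measurable fun z => F z ^ p := hF.pow_const p
  calc ∫⁻ x, (∫⁻ y, K y * F (x - y) ∂μ) ^ p ∂μ
      ≤ ∫⁻ x, (∫⁻ y, K y ∂μ) ^ (p - 1) * ∫⁻ y, K y * F (x - y) ^ p ∂μ ∂μ :=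
        lintegral_mono fun x => rpow_lintegral_mul_le hK.aemeasurable
          (hF.comp (measurable_const.sub measurable_id)).aemeasurable hp
    _ = (∫⁻ y, K y ∂μ) ^ (p - 1) * ((∫⁻ y, K y ∂μ) * ∫⁻ z, F z ^ p ∂μ) := by
        rw [lintegral_const_mul _ (Measurable.lintegral_prod_right' (f := fun q : G × G =>
          K q.2 * F (q.1 - q.2) ^ p) (by fun_prop)), lintegral_lintegral_mul_comp_sub hK hFp]
    _ = (∫⁻ y, K y ∂μ) ^ p * ∫⁻ z, F z ^ p ∂μ := by
        rw [← mul_assoc]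
        congr 1
        conv_rhs => rw [← sub_add_cancel p 1]
        rw [ENNReal.rpow_add_of_nonneg _ _ (sub_nonneg.2 hp) zero_le_one, ENNReal.rpow_one]

theorem eLpNorm_lintegral_mul_comp_sub_le_of_measurable {K F : G → ℝ≥0∞} (hK : Measurable K)
    (hF : Measurable F) {r : ℝ≥0∞} (hr : 1 ≤ r) :
    eLpNorm (fun x => ∫⁻ y, K y * F (x - y) ∂μ) r μ ≤ (∫⁻ y, K y ∂μ) * eLpNorm F r μ := by
  rcases eq_or_ne r ⊤ with rfl | hr_top
  · rw [eLpNorm_exponent_top, eLpNorm_exponent_top]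
    refine eLpNormEssSup_le_of_ae_enorm_bound (.of_forall fun x => ?_)
    have hF_le : ∀ᵐ y ∂μ, F (x - y) ≤ eLpNormEssSup F μ :=
      (quasiMeasurePreserving_sub_left μ x).ae (ae_le_eLpNormEssSup (f := F))
    calc ∫⁻ y, K y * F (x - y) ∂μ ≤ ∫⁻ y, K y * eLpNormEssSup F μ ∂μ :=
          lintegral_mono_ae (hF_le.mono fun y hy => mul_le_mul_right hy _)
      _ = (∫⁻ y, K y ∂μ) * eLpNormEssSup F μ := lintegral_mul_const _ hK
  · have hr0 : r ≠ 0 := (zero_lt_one.trans_le hr).ne'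
    have hp : 1 ≤ r.toReal := ENNReal.toReal_mono hr_top hr |>.trans_eq' ENNReal.toReal_one.symm
    have hp0 : 0 < r.toReal := zero_lt_one.trans_le hp
    simp only [eLpNorm_eq_lintegral_rpow_enorm_toReal hr0 hr_top, enorm_eq_self]
    calc (∫⁻ x, (∫⁻ y, K y * F (x - y) ∂μ) ^ r.toReal ∂μ) ^ (1 / r.toReal)
        ≤ ((∫⁻ y, K y ∂μ) ^ r.toReal * ∫⁻ z, F z ^ r.toReal ∂μ) ^ (1 / r.toReal) :=
          ENNReal.rpow_le_rpow (lintegral_rpow_lintegral_mul_comp_sub_le hK hF hp) (by positivity)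
      _ = (∫⁻ y, K y ∂μ) * (∫⁻ z, F z ^ r.toReal ∂μ) ^ (1 / r.toReal) := by
          rw [ENNReal.mul_rpow_of_nonneg _ _ (by positivity), ← ENNReal.rpow_mul,
            mul_one_div_cancel hp0.ne', ENNReal.rpow_one]

theorem eLpNorm_lintegral_mul_comp_sub_le {K F : G → ℝ≥0∞} (hK : AEMeasurable K μ)
    (hF : AEMeasurable F μ) {r : ℝ≥0∞} (hr : 1 ≤ r) :
    eLpNorm (fun x => ∫⁻ y, K y * F (x - y) ∂μ) r μ ≤ (∫⁻ y, K y ∂μ) * eLpNorm F r μ := by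
  have hconv : (fun x => ∫⁻ y, K y * F (x - y) ∂μ) =
      fun x => ∫⁻ y, hK.mk K y * hF.mk F (x - y) ∂μ := funext fun x => lintegral_congr_ae <| by
    filter_upwards [hK.ae_eq_mk, (quasiMeasurePreserving_sub_left μ x).ae_eq hF.ae_eq_mk]
      with y hKy hFy
    simp only [Function.comp_apply] at hFy
    rw [hKy, hFy]
  rw [hconv, lintegral_congr_ae hK.ae_eq_mk, eLpNorm_congr_ae hF.ae_eq_mk]
  exact eLpNorm_lintegral_mul_comp_sub_le_of_measurable hK.measurable_mk hF.measurable_mk hr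

/-- Young's convolution inequality for an `L¹` kernel. -/
theorem eLpNorm_integral_mul_comp_sub_le {A : Type*} [NormedRing A] [NormedSpace ℝ A]
    {k f : G → A} (hk : AEStronglyMeasurable k μ) (hf : AEStronglyMeasurable f μ)
    {r : ℝ≥0∞} (hr : 1 ≤ r) :
    eLpNorm (fun x => ∫ y, k y * f (x - y) ∂μ) r μ ≤ eLpNorm k 1 μ * eLpNorm f r μ := by
  calc eLpNorm (fun x => ∫ y, k y * f (x - y) ∂μ) r μ
      ≤ eLpNorm (fun x => ∫⁻ y, ‖k y‖ₑ * ‖f (x - y)‖ₑ ∂μ) r μ :=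
        eLpNorm_mono_enorm fun x => (enorm_integral_le_lintegral_enorm _).trans
          (lintegral_mono fun y => by
            simpa only [enorm, ENNReal.coe_mul] using
              ENNReal.coe_le_coe.2 (nnnorm_mul_le (k y) (f (x - y))))
    _ ≤ (∫⁻ y, ‖k y‖ₑ ∂μ) * eLpNorm (fun z => ‖f z‖ₑ) r μ :=
        eLpNorm_lintegral_mul_comp_sub_le hk.enorm hf.enorm hr
    _ = eLpNorm k 1 μ * eLpNorm f r μ := by rw [eLpNorm_one_eq_lintegral_enorm, eLpNorm_enorm]

end Convolution

theorem FT_eq_fourier {n : ℕ} (f : E n → ℂ) (ξ : E n) :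
    FT n f ξ = (((2 * Real.pi) ^ (-(n : ℝ) / 2) : ℝ) : ℂ) * 𝓕 f ((2 * Real.pi)⁻¹ • ξ) := by
  rw [Real.fourier_eq', FT]
  congr 1
  refine integral_congr_ae (.of_forall fun x => ?_)
  simp only [real_inner_smul_right, smul_eq_mul, mul_comm (f x)]
  congr 1
  push_cast
  field_simp

theorem invFT_eq_FT_neg {n : ℕ} (g : E n → ℂ) (x : E n) : invFT n g x = FT n g (-x) := by
  simp only [invFT, FT, inner_neg_right, real_inner_comm x, Complex.ofReal_neg, mul_neg, neg_neg]

theorem exists_schwartzMap_coe_eq_FT {n : ℕ} (φ : 𝓢(E n, ℂ)) :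
    ∃ χ : 𝓢(E n, ℂ), ⇑χ = FT n φ := by
  let scale : E n ≃L[ℝ] E n :=
    (LinearEquiv.smulOfNeZero ℝ (E n) (2 * Real.pi)⁻¹ (by positivity)).toContinuousLinearEquiv
  refine ⟨(((2 * Real.pi) ^ (-(n : ℝ) / 2) : ℝ) : ℂ) •
    SchwartzMap.compCLMOfContinuousLinearEquiv ℂ scale (𝓕 φ), funext fun ξ => ?_⟩
  rw [FT_eq_fourier]
  rfl

theorem continuous_FT {n : ℕ} (φ : 𝓢(E n, ℂ)) : Continuous (FT n φ) := by
  obtain ⟨χ, hχ⟩ := exists_schwartzMap_coe_eq_FT φ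
  exact hχ ▸ χ.continuous

theorem continuous_invFT {n : ℕ} (φ : 𝓢(E n, ℂ)) : Continuous (invFT n φ) := by
  rw [funext (invFT_eq_FT_neg φ)]
  exact (continuous_FT φ).comp continuous_neg

theorem eLpNorm_invFT_eq_eLpNorm_FT {n : ℕ} {g : E n → ℂ}
    (hg : AEStronglyMeasurable (FT n g) volume) (p : ℝ≥0∞) :
    eLpNorm (invFT n g) p volume = eLpNorm (FT n g) p volume := by
  rw [show invFT n g = FT n g ∘ Neg.neg from funext (invFT_eq_FT_neg g)]
  exact eLpNorm_comp_measurePreserving hg (Measure.measurePreserving_neg volume)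

theorem continuous_one_add_norm_sq_rpow {F : Type*} [NormedAddCommGroup F] [InnerProductSpace ℝ F]
    (r : ℝ) : Continuous fun ξ : F => (1 + ‖ξ‖ ^ 2) ^ r :=
  (continuous_const.add (continuous_norm.pow 2)).rpow_const
    fun ξ => .inl (by positivity : (1 : ℝ) + ‖ξ‖ ^ 2 ≠ 0)

theorem memLp_one_add_norm_sq_rpow_neg {F : Type*} [NormedAddCommGroup F] [InnerProductSpace ℝ F]
    [FiniteDimensional ℝ F] [MeasurableSpace F] [BorelSpace F] {s : ℝ}
    (hs : (Module.finrank ℝ F : ℝ) < 2 * s) :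
    MemLp (fun ξ : F => (1 + ‖ξ‖ ^ 2) ^ (-s / 2)) 2 volume := by
  refine (memLp_two_iff_integrable_sq (continuous_one_add_norm_sq_rpow _).aestronglyMeasurable).2 ?_
  refine (integrable_rpow_neg_one_add_norm_sq hs).congr (.of_forall fun ξ => ?_)
  simp only [← Real.rpow_mul_natCast (by positivity : (0 : ℝ) ≤ 1 + ‖ξ‖ ^ 2)]
  ring_nf

theorem ofReal_HsNorm_eq_eLpNorm {n : ℕ} (s : ℝ) (g : E n → ℂ)
    (hg : MemLp (fun ξ => (1 + ‖ξ‖ ^ 2) ^ (s / 2) • FT n g ξ) 2 volume) :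
    ENNReal.ofReal (HsNorm n s g) =
      eLpNorm (fun ξ => (1 + ‖ξ‖ ^ 2) ^ (s / 2) • FT n g ξ) 2 volume := by
  rw [hg.eLpNorm_eq_integral_rpow_norm two_ne_zero ENNReal.ofNat_ne_top, HsNorm, Real.sqrt_eq_rpow]
  congr 2
  · refine integral_congr_ae (.of_forall fun ξ => ?_)
    simp only [norm_smul, Real.norm_of_nonneg (by positivity : (0 : ℝ) ≤ (1 + ‖ξ‖ ^ 2) ^ (s / 2))]
    rw [ENNReal.toReal_ofNat, Real.mul_rpow (by positivity) (norm_nonneg _),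
      ← Real.rpow_mul (by positivity)]
    norm_num
  · norm_num

theorem memLp_one_add_norm_sq_rpow_smul_FT {n : ℕ} (s : ℝ) (φ : 𝓢(E n, ℂ)) :
    MemLp (fun ξ => (1 + ‖ξ‖ ^ 2) ^ (s / 2) • FT n φ ξ) 2 volume := by
  obtain ⟨χ, hχ⟩ := exists_schwartzMap_coe_eq_FT φ
  rw [← hχ, ← SchwartzMap.smulLeftCLM_apply (by fun_prop)]
  exact SchwartzMap.memLp _ 2 volume

theorem eLpNorm_FT_le_mul_HsNorm {n : ℕ} (s : ℝ) (φ : 𝓢(E n, ℂ)) :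
    eLpNorm (FT n φ) 1 volume ≤
      eLpNorm (fun ξ : E n => (1 + ‖ξ‖ ^ 2) ^ (-s / 2)) 2 volume *
        ENNReal.ofReal (HsNorm n s φ) := by
  have hw := memLp_one_add_norm_sq_rpow_smul_FT s φ
  have hsplit : FT n φ = (fun ξ : E n => (1 + ‖ξ‖ ^ 2) ^ (-s / 2)) •
      fun ξ => (1 + ‖ξ‖ ^ 2) ^ (s / 2) • FT n φ ξ := funext fun ξ => by
    rw [Pi.smul_apply', smul_smul, ← Real.rpow_add (by positivity), neg_div, neg_add_cancel,
      Real.rpow_zero, one_smul]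
  rw [hsplit, ofReal_HsNorm_eq_eLpNorm s φ hw]
  exact eLpNorm_smul_le_mul_eLpNorm hw.1 (continuous_one_add_norm_sq_rpow _).aestronglyMeasurable

/-- Bernstein's multiplier estimate: for `s > n/2` and `1 ≤ r ≤ ∞`
there is `C > 0` with `‖𝓕⁻¹(φ 𝓕 f)‖_{L^r} = ‖(2π)^{-n/2}(𝓕⁻¹φ) ∗ f‖_{L^r}
≤ C ‖φ‖_{H^s} ‖f‖_{L^r}`. -/
theorem bernstein_multiplier_estimate (n : ℕ) (s : ℝ) (hs : (n : ℝ) / 2 < s)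
    (r : ℝ≥0∞) (hr : 1 ≤ r) :
    ∃ C : ℝ, 0 < C ∧
      ∀ (φ : SchwartzMap (E n) ℂ) (f : E n → ℂ),
        MemLp f r (volume : Measure (E n)) →
        eLpNorm
            (fun x : E n =>
              (((2 * Real.pi) ^ (-(n : ℝ) / 2) : ℝ) : ℂ) *
                ∫ y : E n, invFT n (⇑φ) y * f (x - y))
            r (volume : Measure (E n)) ≤
          ENNReal.ofReal (C * HsNorm n s ⇑φ) * eLpNorm f r (volume : Measure (E n)) := by
  set c : ℝ := (2 * Real.pi) ^ (-(n : ℝ) / 2)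
  set B := eLpNorm (fun ξ : E n => (1 + ‖ξ‖ ^ 2) ^ (-s / 2)) 2 volume
  have hB : B ≠ ⊤ := (memLp_one_add_norm_sq_rpow_neg
    (by rwa [finrank_euclideanSpace_fin, ← div_lt_iff₀' two_pos])).eLpNorm_ne_top
  have hc_enorm : ‖(c : ℂ)‖ₑ = ENNReal.ofReal c := by
    rw [← ofReal_norm, Complex.norm_of_nonneg (by positivity)]
  refine ⟨c * B.toReal + 1, by positivity, fun φ f hf => ?_⟩
  have hH : 0 ≤ HsNorm n s φ := Real.sqrt_nonneg _
  calc eLpNorm (fun x => (c : ℂ) * ∫ y, invFT n φ y * f (x - y)) r volume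
      = ENNReal.ofReal c * eLpNorm (fun x => ∫ y, invFT n φ y * f (x - y)) r volume := by
        rw [← hc_enorm]
        exact eLpNorm_const_smul (c : ℂ) (fun x => ∫ y, invFT n φ y * f (x - y)) r volume
    _ ≤ ENNReal.ofReal c * (eLpNorm (FT n φ) 1 volume * eLpNorm f r volume) := by
        rw [← eLpNorm_invFT_eq_eLpNorm_FT (continuous_FT φ).aestronglyMeasurable]
        gcongr
        exact eLpNorm_integral_mul_comp_sub_le (continuous_invFT φ).aestronglyMeasurable hf.1 hr
    _ ≤ ENNReal.ofReal c * (B * ENNReal.ofReal (HsNorm n s φ) * eLpNorm f r volume) := by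
        gcongr
        exact eLpNorm_FT_le_mul_HsNorm s φ
    _ = ENNReal.ofReal (c * B.toReal * HsNorm n s φ) * eLpNorm f r volume := by
        rw [ENNReal.ofReal_mul (by positivity), ENNReal.ofReal_mul (by positivity),
          ENNReal.ofReal_toReal hB]
        ring
    _ ≤ ENNReal.ofReal ((c * B.toReal + 1) * HsNorm n s φ) * eLpNorm f r volume := by
        gcongr
        linarith

end
end

section
/- Let s > 1. Then there exists δ ∈ (0,1) depending only on s (one may take δ = 2 − 2^{1/s}) such that for all k, l ∈ ℤⁿ, e^{|k|^{1/s}} ≤ e^{|l|^{1/s}} · e^{|l−k|^{1/s}} · e^{−δ · min(|l−k|, |l|)^{1/s}}, where |·| denotes the Euclidean norm on ℝⁿ. -/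
/-!
With `θ = 1/s ∈ (0,1)`, concavity of `t ↦ t ^ θ` compares the pair `b, a + b` with the pair
`a, 2b` of the same sum lying between them: for `0 ≤ b ≤ a`,
`(a + b) ^ θ ≤ a ^ θ + b ^ θ - (2 - 2 ^ θ) b ^ θ`. Taking `{a, b} = {|l|, |l - k|}` and using
`|k| ≤ |l| + |l - k|` gives the inequality of exponents, with `δ = 2 - 2 ^ θ ∈ (0, 1)`.
-/

open scoped Real BigOperators

noncomputable section

/-- The Euclidean norm of a lattice point `k ∈ ℤⁿ`. -/
def znorm {n : ℕ} (k : Fin n → ℤ) : ℝ :=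
  Real.sqrt (∑ i, ((k i : ℝ)) ^ 2)

theorem ConcaveOn.map_add_map_le_of_add_eq {s : Set ℝ} {f : ℝ → ℝ} (hf : ConcaveOn ℝ s f)
    {p q q' r : ℝ} (hp : p ∈ s) (hr : r ∈ s) (hpq : p ≤ q) (hqr : q ≤ r) (h : p + r = q + q') :
    f p + f r ≤ f q + f q' := by
  rcases hpq.trans hqr |>.eq_or_lt with rfl | hpr
  · obtain rfl : q = p := le_antisymm hqr hpq
    obtain rfl : q' = q := by linarith
    rfl
  set t := (r - q) / (r - p)
  have ht₀ : 0 ≤ t := div_nonneg (by linarith) (by linarith)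
  have ht₁ : t ≤ 1 := div_le_one_of_le₀ (by linarith) (by linarith)
  have hq : t * p + (1 - t) * r = q := by
    have : t * (r - p) = r - q := div_mul_cancel₀ _ (sub_pos.2 hpr).ne'
    linarith
  have hq' : (1 - t) * p + t * r = q' := by linarith
  have h₁ := hf.2 hp hr ht₀ (sub_nonneg.2 ht₁) (add_sub_cancel t 1)
  have h₂ := hf.2 hp hr (sub_nonneg.2 ht₁) ht₀ (sub_add_cancel 1 t)
  simp only [smul_eq_mul, hq, hq'] at h₁ h₂
  linarith

namespace Real

theorem add_rpow_add_mul_rpow_le {θ a b : ℝ} (hθ₀ : 0 ≤ θ) (hθ₁ : θ ≤ 1) (hb : 0 ≤ b)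
    (hba : b ≤ a) : (a + b) ^ θ + (2 - 2 ^ θ) * b ^ θ ≤ a ^ θ + b ^ θ := by
  have h := (concaveOn_rpow hθ₀ hθ₁).map_add_map_le_of_add_eq (p := b) (q := a) (q' := 2 * b)
    (r := a + b) hb (by simp only [Set.mem_Ici]; linarith) hba (by linarith) (by ring)
  rw [mul_rpow zero_le_two hb] at h
  linarith

theorem add_rpow_add_mul_min_rpow_le {θ x y : ℝ} (hθ₀ : 0 ≤ θ) (hθ₁ : θ ≤ 1) (hx : 0 ≤ x)
    (hy : 0 ≤ y) : (x + y) ^ θ + (2 - 2 ^ θ) * min x y ^ θ ≤ x ^ θ + y ^ θ := by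
  rcases le_total x y with hxy | hyx
  · rw [min_eq_left hxy, add_comm x, add_comm (x ^ θ)]
    exact add_rpow_add_mul_rpow_le hθ₀ hθ₁ hx hxy
  · rw [min_eq_right hyx]
    exact add_rpow_add_mul_rpow_le hθ₀ hθ₁ hy hyx

end Real

theorem znorm_eq_norm {n : ℕ} (k : Fin n → ℤ) :
    znorm k = ‖WithLp.toLp 2 (fun i => (k i : ℝ))‖ := by
  simp [znorm, EuclideanSpace.norm_eq]

theorem znorm_nonneg {n : ℕ} (k : Fin n → ℤ) : 0 ≤ znorm k :=
  Real.sqrt_nonneg _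

theorem znorm_sub_le {n : ℕ} (k l : Fin n → ℤ) : znorm (k - l) ≤ znorm k + znorm l := by
  simp only [znorm_eq_norm, Pi.sub_apply, Int.cast_sub]
  exact norm_sub_le (WithLp.toLp 2 (fun i => (k i : ℝ))) (WithLp.toLp 2 fun i => (l i : ℝ))

/-- for `s > 1` there is `δ ∈ (0,1)` (depending only on `s`;
one may take `δ = 2 - 2^{1/s}`) such that for all `k, l ∈ ℤⁿ`,
`e^{|k|^{1/s}} ≤ e^{|l|^{1/s}} e^{|l-k|^{1/s}} e^{-δ min(|l-k|,|l|)^{1/s}}`. -/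
theorem weight_submultiplicativity (s : ℝ) (hs : 1 < s) :
    ∃ δ : ℝ, 0 < δ ∧ δ < 1 ∧
      ∀ (n : ℕ) (k l : Fin n → ℤ),
        Real.exp (znorm k ^ (1 / s)) ≤
          Real.exp (znorm l ^ (1 / s)) * Real.exp (znorm (l - k) ^ (1 / s)) *
            Real.exp (-δ * min (znorm (l - k)) (znorm l) ^ (1 / s)) := by
  have hθ₀ : 0 < 1 / s := by positivity
  have hθ₁ : 1 / s < 1 := (div_lt_one (by linarith)).2 hs
  have h₁ : 1 < (2 : ℝ) ^ (1 / s) := Real.one_lt_rpow one_lt_two hθ₀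
  have h₂ : (2 : ℝ) ^ (1 / s) < 2 := Real.rpow_lt_self_of_one_lt one_lt_two hθ₁
  refine ⟨2 - 2 ^ (1 / s), by linarith, by linarith, fun n k l => ?_⟩
  rw [← Real.exp_add, ← Real.exp_add, Real.exp_le_exp]
  have hk : znorm k ≤ znorm l + znorm (l - k) := by
    simpa using znorm_sub_le l (l - k)
  have key := Real.add_rpow_add_mul_min_rpow_le hθ₀.le hθ₁.le (znorm_nonneg l)
    (znorm_nonneg (l - k))
  rw [min_comm] at key
  have hkθ := Real.rpow_le_rpow (znorm_nonneg k) hk hθ₀.le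
  linarith

end
end

section
/- Let α > 0 and define f(t) = ∫_t^∞ e^{−y} y^{α−1} dy for t ≥ 0. Then f is a continuous strictly decreasing bijection from [0,∞) onto (0, Γ(α)], and its inverse g : (0, Γ(α)] → [0,∞) satisfies lim_{u → 0⁺} g(u) / log(1/u) = 1. -/
/-!
Write `Γ(α, t) = ∫_t^∞ e^{-y} y^{α-1} dy = Γ(α) - ∫_0^t e^{-y} y^{α-1} dy`. The integrand is
positive and locally integrable, which gives continuity, strict monotonicity and the range
`(0, Γ(α)]`. For the asymptotics, `-log Γ(α, t) = t + O(log t)`: on `y ≥ t` one has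
`e^{-y} ≤ e^{-(1-r)t} e^{-ry}`, and `∫_0^∞ y^{α-1} e^{-ry} dy = Γ(α) / r^α`, so taking `r = 1/t`
gives `Γ(α, t) ≤ e^{1-t} t^α Γ(α)`; integrating only over `(t, t+1]` gives
`Γ(α, t) ≥ e^{-(t+1)} (t+1)^{-|α-1|}`. Finally `g(u) / log(1/u) = t / (-log Γ(α, t))` at
`t = g(u)`, and `g(u) → ∞` as `u → 0⁺`.
-/
open MeasureTheory Filter
open scoped Real Topology

noncomputable section

open Set Real

def upperIncompleteGamma (α t : ℝ) : ℝ :=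
  ∫ y in Ioi t, exp (-y) * y ^ (α - 1)

variable {α : ℝ}

lemma intervalIntegrable_gammaIntegrand (hα : 0 < α) (a b : ℝ) :
    IntervalIntegrable (fun y => exp (-y) * y ^ (α - 1)) volume a b :=
  (intervalIntegral.intervalIntegrable_rpow' (by linarith)).continuousOn_mul
    continuousOn_id.neg.rexp

lemma integrableOn_gammaIntegrand_Ioi (hα : 0 < α) {t : ℝ} (ht : 0 ≤ t) :
    IntegrableOn (fun y => exp (-y) * y ^ (α - 1)) (Ioi t) :=
  (GammaIntegral_convergent hα).mono_set (Ioi_subset_Ioi ht)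

lemma upperIncompleteGamma_zero (hα : 0 < α) : upperIncompleteGamma α 0 = Gamma α :=
  (Gamma_eq_integral hα).symm

lemma upperIncompleteGamma_sub (hα : 0 < α) {s t : ℝ} (hs : 0 ≤ s) (hst : s ≤ t) :
    upperIncompleteGamma α s - upperIncompleteGamma α t =
      ∫ y in s..t, exp (-y) * y ^ (α - 1) :=
  intervalIntegral.integral_Ioi_sub_Ioi (integrableOn_gammaIntegrand_Ioi hα hs) hst

lemma upperIncompleteGamma_eq_Gamma_sub (hα : 0 < α) {t : ℝ} (ht : 0 ≤ t) :
    upperIncompleteGamma α t = Gamma α - ∫ y in 0..t, exp (-y) * y ^ (α - 1) := by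
  rw [← upperIncompleteGamma_sub hα le_rfl ht, upperIncompleteGamma_zero hα, sub_sub_cancel]

lemma upperIncompleteGamma_nonneg {t : ℝ} (ht : 0 ≤ t) : 0 ≤ upperIncompleteGamma α t :=
  setIntegral_nonneg measurableSet_Ioi fun y hy => by
    have := ht.trans_lt hy
    positivity

lemma strictAntiOn_upperIncompleteGamma (hα : 0 < α) :
    StrictAntiOn (upperIncompleteGamma α) (Ici 0) := by
  intro s hs t _ hst
  rw [← sub_pos, upperIncompleteGamma_sub hα hs hst.le]
  refine intervalIntegral.intervalIntegral_pos_of_pos_on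
    (intervalIntegrable_gammaIntegrand hα s t) (fun y hy => ?_) hst
  have := lt_of_le_of_lt hs hy.1
  positivity

lemma upperIncompleteGamma_pos (hα : 0 < α) {t : ℝ} (ht : 0 ≤ t) :
    0 < upperIncompleteGamma α t :=
  (upperIncompleteGamma_nonneg (by linarith)).trans_lt
    (strictAntiOn_upperIncompleteGamma hα ht (mem_Ici.2 (by linarith)) (lt_add_one t))

lemma continuousOn_upperIncompleteGamma (hα : 0 < α) :
    ContinuousOn (upperIncompleteGamma α) (Ici 0) :=
  (continuous_const.sub (intervalIntegral.continuous_primitive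
    (intervalIntegrable_gammaIntegrand hα) 0)).continuousOn.congr
    fun _ ht => upperIncompleteGamma_eq_Gamma_sub hα ht

lemma tendsto_upperIncompleteGamma_atTop (hα : 0 < α) :
    Tendsto (upperIncompleteGamma α) atTop (𝓝 0) := by
  have h := intervalIntegral_tendsto_integral_Ioi 0 (GammaIntegral_convergent hα) tendsto_id
  rw [← Gamma_eq_integral hα] at h
  refine (sub_self (Gamma α) ▸ tendsto_const_nhds.sub h).congr' ?_
  filter_upwards [eventually_ge_atTop 0] with t ht
  exact (upperIncompleteGamma_eq_Gamma_sub hα ht).symm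

lemma bijOn_upperIncompleteGamma (hα : 0 < α) :
    BijOn (upperIncompleteGamma α) (Ici 0) (Ioc 0 (Gamma α)) := by
  have hanti := strictAntiOn_upperIncompleteGamma hα
  refine ⟨fun t ht => ⟨upperIncompleteGamma_pos hα ht, ?_⟩, hanti.injOn, fun u hu => ?_⟩
  · rw [← upperIncompleteGamma_zero hα]
    exact hanti.antitoneOn self_mem_Ici ht ht
  obtain ⟨T, hTu, hT⟩ := (((tendsto_upperIncompleteGamma_atTop hα).eventually
    (eventually_lt_nhds hu.1)).and (eventually_ge_atTop 0)).exists
  obtain ⟨t, ht, rfl⟩ := intermediate_value_Icc' hT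
    ((continuousOn_upperIncompleteGamma hα).mono Icc_subset_Ici_self)
    ⟨hTu.le, upperIncompleteGamma_zero hα ▸ hu.2⟩
  exact ⟨t, ht.1, rfl⟩

lemma upperIncompleteGamma_le (hα : 0 < α) {r t : ℝ} (hr₀ : 0 < r) (hr₁ : r ≤ 1)
    (ht : 0 ≤ t) :
    upperIncompleteGamma α t ≤ exp (-((1 - r) * t)) * ((1 / r) ^ α * Gamma α) := by
  have hψ : IntegrableOn (fun y => y ^ (α - 1) * exp (-(r * y))) (Ioi 0) :=
    Integrable.of_integral_ne_zero (by
      rw [integral_rpow_mul_exp_neg_mul_Ioi hα hr₀]; positivity)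
  rw [← integral_rpow_mul_exp_neg_mul_Ioi hα hr₀, ← integral_const_mul]
  calc upperIncompleteGamma α t
      ≤ ∫ y in Ioi t, exp (-((1 - r) * t)) * (y ^ (α - 1) * exp (-(r * y))) := by
        refine setIntegral_mono_on (integrableOn_gammaIntegrand_Ioi hα ht)
          ((hψ.mono_set (Ioi_subset_Ioi ht)).const_mul _) measurableSet_Ioi fun y hy => ?_
        have hy₀ : 0 < y := ht.trans_lt hy
        have : exp (-y) ≤ exp (-((1 - r) * t)) * exp (-(r * y)) := by
          rw [← exp_add, exp_le_exp]
          nlinarith [mul_nonneg (sub_nonneg.2 hr₁) (sub_nonneg.2 (mem_Ioi.1 hy).le)]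
        calc exp (-y) * y ^ (α - 1) ≤ exp (-((1 - r) * t)) * exp (-(r * y)) * y ^ (α - 1) := by
              gcongr
          _ = _ := by ring
    _ ≤ ∫ y in Ioi 0, exp (-((1 - r) * t)) * (y ^ (α - 1) * exp (-(r * y))) := by
        refine setIntegral_mono_set (hψ.const_mul _) ?_ (Ioi_subset_Ioi ht).eventuallyLE
        filter_upwards [ae_restrict_mem measurableSet_Ioi] with y hy
        have : 0 < y := hy
        positivity

lemma upperIncompleteGamma_le_of_one_le (hα : 0 < α) {t : ℝ} (ht : 1 ≤ t) :
    upperIncompleteGamma α t ≤ exp (1 - t) * (t ^ α * Gamma α) := by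
  have h := upperIncompleteGamma_le hα (r := 1 / t) (by positivity)
    (div_le_one_of_le₀ ht (by linarith)) (by linarith)
  rwa [one_div_one_div, one_sub_div (by positivity), div_mul_cancel₀ _ (by positivity),
    neg_sub] at h

lemma exp_mul_rpow_le_upperIncompleteGamma (hα : 0 < α) {t : ℝ} (ht : 1 ≤ t) :
    exp (-(t + 1)) * (t + 1) ^ (-|α - 1|) ≤ upperIncompleteGamma α t := by
  have hint := integrableOn_gammaIntegrand_Ioi hα (zero_le_one.trans ht)
  calc exp (-(t + 1)) * (t + 1) ^ (-|α - 1|)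
      = ∫ _ in Ioc t (t + 1), exp (-(t + 1)) * (t + 1) ^ (-|α - 1|) := by simp
    _ ≤ ∫ y in Ioc t (t + 1), exp (-y) * y ^ (α - 1) := by
        refine setIntegral_mono_on (integrableOn_const (by simp))
          (hint.mono_set Ioc_subset_Ioi_self) measurableSet_Ioc fun y hy => ?_
        have hy₁ : 1 ≤ y := ht.trans hy.1.le
        gcongr
        · exact hy.2
        · calc (t + 1) ^ (-|α - 1|) ≤ y ^ (-|α - 1|) :=
                rpow_le_rpow_of_nonpos (by linarith) hy.2 (by simp)
            _ ≤ y ^ (α - 1) := rpow_le_rpow_of_exponent_le hy₁ (neg_abs_le _)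
    _ ≤ upperIncompleteGamma α t := by
        refine setIntegral_mono_set hint ?_ Ioc_subset_Ioi_self.eventuallyLE
        filter_upwards [ae_restrict_mem measurableSet_Ioi] with y hy
        have : 0 < y := by linarith [mem_Ioi.1 hy]
        positivity

lemma tendsto_add_add_mul_log_div (a b : ℝ) :
    Tendsto (fun t => (t + a + b * log (t + 1)) / t) atTop (𝓝 1) := by
  have hlog : Tendsto (fun t => log (t + 1) / t) atTop (𝓝 0) := by
    refine ((tendsto_pow_log_div_mul_add_atTop 1 (-1) 1 one_ne_zero).comp
      (tendsto_atTop_add_const_right atTop 1 tendsto_id)).congr fun t => ?_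
    simp
  have hlim := ((tendsto_const_nhds (x := a)).div_atTop tendsto_id).add (hlog.const_mul b)
  rw [mul_zero, add_zero] at hlim
  refine (zero_add (1 : ℝ) ▸ hlim.add_const 1).congr' ?_
  filter_upwards [eventually_gt_atTop 0] with t ht
  simp only [id]
  field_simp
  ring

lemma tendsto_div_neg_log_upperIncompleteGamma (hα : 0 < α) :
    Tendsto (fun t => t / -log (upperIncompleteGamma α t)) atTop (𝓝 1) := by
  have hlower : ∀ᶠ t in atTop,
      (t + (-1 - log (Gamma α)) + -α * log (t + 1)) / t ≤
        -log (upperIncompleteGamma α t) / t := by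
    filter_upwards [eventually_ge_atTop 1] with t ht
    have hlog := log_le_log (upperIncompleteGamma_pos hα (by linarith))
      (upperIncompleteGamma_le_of_one_le hα ht)
    rw [log_mul (by positivity) (by positivity), log_mul (by positivity) (by positivity), log_exp,
      log_rpow (by positivity)] at hlog
    have := mul_le_mul_of_nonneg_left (log_le_log (by positivity) (lt_add_one t).le) hα.le
    gcongr
    linarith
  have hupper : ∀ᶠ t in atTop,
      -log (upperIncompleteGamma α t) / t ≤ (t + 1 + |α - 1| * log (t + 1)) / t := by
    filter_upwards [eventually_ge_atTop 1] with t ht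
    have hlog := log_le_log (by positivity) (exp_mul_rpow_le_upperIncompleteGamma hα ht)
    rw [log_mul (by positivity) (by positivity), log_exp, log_rpow (by positivity)] at hlog
    gcongr
    linarith
  have h := tendsto_of_tendsto_of_tendsto_of_le_of_le' (tendsto_add_add_mul_log_div _ _)
    (tendsto_add_add_mul_log_div _ _) hlower hupper
  simpa using h.inv₀ one_ne_zero

lemma tendsto_atTop_of_invOn_upperIncompleteGamma (hα : 0 < α) {g : ℝ → ℝ}
    (hg : InvOn g (upperIncompleteGamma α) (Ici 0) (Ioc 0 (Gamma α))) :
    Tendsto g (𝓝[>] 0) atTop := by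
  have hmaps : MapsTo g (Ioc 0 (Gamma α)) (Ici 0) :=
    hg.1.mapsTo (bijOn_upperIncompleteGamma hα).surjOn
  refine tendsto_atTop.2 fun M => ?_
  have hM : (0 : ℝ) ≤ max M 0 := le_max_right _ _
  filter_upwards [Ioo_mem_nhdsGT (lt_min (upperIncompleteGamma_pos hα hM) (Gamma_pos_of_pos hα))]
    with u ⟨hu₀, hu⟩
  have hu' : u ∈ Ioc 0 (Gamma α) := ⟨hu₀, hu.le.trans (min_le_right _ _)⟩
  by_contra! hgu
  have := (strictAntiOn_upperIncompleteGamma hα).antitoneOn (hmaps hu') hM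
    (hgu.le.trans (le_max_left _ _))
  rw [hg.2 hu'] at this
  linarith [min_le_left (upperIncompleteGamma α (max M 0)) (Gamma α)]

/-- for `α > 0`, the incomplete Gamma tail
`f(t) = ∫_t^∞ e^{-y} y^{α-1} dy` is continuous and strictly decreasing on
`[0,∞)`, maps `[0,∞)` bijectively onto `(0, Γ(α)]`, and any inverse
`g : (0, Γ(α)] → [0,∞)` of `f` satisfies `g(u)/log(1/u) → 1` as `u → 0⁺`. -/
theorem gamma_tail_inverse_asymptotics (α : ℝ) (hα : 0 < α) :
    (ContinuousOn (fun t : ℝ => ∫ y in Set.Ioi t, Real.exp (-y) * y ^ (α - 1))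
        (Set.Ici (0 : ℝ))) ∧
    (StrictAntiOn (fun t : ℝ => ∫ y in Set.Ioi t, Real.exp (-y) * y ^ (α - 1))
        (Set.Ici (0 : ℝ))) ∧
    (Set.BijOn (fun t : ℝ => ∫ y in Set.Ioi t, Real.exp (-y) * y ^ (α - 1))
        (Set.Ici (0 : ℝ)) (Set.Ioc 0 (Real.Gamma α))) ∧
    (∀ g : ℝ → ℝ,
      Set.InvOn g (fun t : ℝ => ∫ y in Set.Ioi t, Real.exp (-y) * y ^ (α - 1))
        (Set.Ici (0 : ℝ)) (Set.Ioc 0 (Real.Gamma α)) →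
      Tendsto (fun u : ℝ => g u / Real.log (1 / u)) (𝓝[>] (0 : ℝ)) (𝓝 1)) := by
  refine ⟨continuousOn_upperIncompleteGamma hα, strictAntiOn_upperIncompleteGamma hα,
    bijOn_upperIncompleteGamma hα, fun g hg => ?_⟩
  refine ((tendsto_div_neg_log_upperIncompleteGamma hα).comp
    (tendsto_atTop_of_invOn_upperIncompleteGamma hα hg)).congr' ?_
  filter_upwards [Ioo_mem_nhdsGT (Gamma_pos_of_pos hα)] with u ⟨hu₀, hu⟩
  have hgu : upperIncompleteGamma α (g u) = u := hg.2 ⟨hu₀, hu.le⟩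
  simp [hgu, log_inv]

end
end
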